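/- Let G be a (P_6, bull)-free graph that is quasi-prime, contains no K_5, no double wheel, and no induced copies of F_0 through F_6, and contains an induced gem {v_1,...,v_5} (edges v_1v_2, v_2v_3, v_3v_4, v_5v_i for i=1,...,4). Define X = {x : x adjacent to v_1 and v_4, nonadjacent to v_2 and v_3}, and V_5 = {x : N(x) ∩ {v_1,...,v_5} \ {v_5} = {v_1,v_2,v_3,v_4}}. Then X is anticomplete to V_5 and X is nonempty implies every vertex of X is adjacent to every vertex of V_1 ∪ V_4 and nonadjacent to every vertex of V_2 ∪ V_3 ∪ V_5 (where V_i = {x : N(x) ∩ S \ {v_i} = N_S(v_i)} for S = {v_1,...,v_5}). -/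

import Mathlib

/-- The bull: vertices `a,b,c,d,e = 0,1,2,3,4` with edges `ab, bc, cd, be, ce`. -/
def bull : SimpleGraph (Fin 5) :=
  SimpleGraph.fromRel (fun a b => (a, b) ∈
    ([(0,1),(1,2),(2,3),(1,4),(2,4)] : List (Fin 5 × Fin 5)))

/-- The gem: a path `v₁v₂v₃v₄ = 0,1,2,3` plus a dominating vertex `v₅ = 4`. -/
def gem : SimpleGraph (Fin 5) :=
  SimpleGraph.fromRel (fun a b => (a, b) ∈
    ([(0,1),(1,2),(2,3),(4,0),(4,1),(4,2),(4,3)] : List (Fin 5 × Fin 5)))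

/-- The double wheel: a `C₅` plus two adjacent vertices each complete to the cycle. -/
def doubleWheel : SimpleGraph (Fin 7) :=
  SimpleGraph.fromRel (fun a b => (a, b) ∈
    ([(0,1),(1,2),(2,3),(3,4),(4,0),(5,6),
      (5,0),(5,1),(5,2),(5,3),(5,4),
      (6,0),(6,1),(6,2),(6,3),(6,4)] : List (Fin 7 × Fin 7)))

/-- `F₀`: a 5-cycle, a vertex complete to it, and a vertex adjacent to `v₁,…,v₄`. -/
def F0 : SimpleGraph (Fin 7) :=
  SimpleGraph.fromRel (fun a b => (a, b) ∈
    ([(0,1),(1,2),(2,3),(3,4),(4,0),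
      (5,0),(5,1),(5,2),(5,3),(5,4),
      (6,0),(6,1),(6,2),(6,3)] : List (Fin 7 × Fin 7)))

/-- `F₁`: a `P₅` plus a dominating vertex. -/
def F1 : SimpleGraph (Fin 6) :=
  SimpleGraph.fromRel (fun a b => (a, b) ∈
    ([(0,1),(1,2),(2,3),(3,4),(5,0),(5,1),(5,2),(5,3),(5,4)] : List (Fin 6 × Fin 6)))

/-- `F₂`: `F₁` plus the edge `v₁v₅`. -/
def F2 : SimpleGraph (Fin 6) :=
  SimpleGraph.fromRel (fun a b => (a, b) ∈
    ([(0,1),(1,2),(2,3),(3,4),(0,4),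
      (5,0),(5,1),(5,2),(5,3),(5,4)] : List (Fin 6 × Fin 6)))

/-- `F₃`. -/
def F3 : SimpleGraph (Fin 6) :=
  SimpleGraph.fromRel (fun a b => (a, b) ∈
    ([(0,1),(0,2),(1,2),(1,3),(2,3),(2,4),(3,4),(3,5),(4,5)] : List (Fin 6 × Fin 6)))

/-- `F₄`: `F₃` plus the edge `v₁v₆`. -/
def F4 : SimpleGraph (Fin 6) :=
  SimpleGraph.fromRel (fun a b => (a, b) ∈
    ([(0,1),(0,2),(1,2),(1,3),(2,3),(2,4),(3,4),(3,5),(4,5),(0,5)] :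
      List (Fin 6 × Fin 6)))

/-- The cycle on 6 vertices. -/
def cycle6 : SimpleGraph (Fin 6) :=
  SimpleGraph.fromRel (fun a b => (a, b) ∈
    ([(0,1),(1,2),(2,3),(3,4),(4,5),(5,0)] : List (Fin 6 × Fin 6)))

/-- `F₅`: the complement of `C₆`. -/
def F5 : SimpleGraph (Fin 6) := cycle6ᶜ

/-- `F₆`. -/
def F6 : SimpleGraph (Fin 7) :=
  SimpleGraph.fromRel (fun a b => (a, b) ∈
    ([(0,1),(1,2),(2,3),(3,4),(4,0),
      (5,0),(5,1),(5,2),(5,4),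
      (6,1),(6,2),(6,3),(6,4),(6,5)] : List (Fin 7 × Fin 7)))

/-- `G` contains no induced subgraph isomorphic to `F`. -/
def InducedFree {α β : Type*} (F : SimpleGraph α) (G : SimpleGraph β) : Prop :=
  ¬ ∃ f : α ↪ β, ∀ a b : α, G.Adj (f a) (f b) ↔ F.Adj a b

/-- A homogeneous set: every vertex outside `S` is complete or anticomplete to `S`. -/
def IsHomog {V : Type*} (G : SimpleGraph V) (S : Set V) : Prop :=
  ∀ v ∉ S, (∀ s ∈ S, G.Adj v s) ∨ (∀ s ∈ S, ¬ G.Adj v s)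

/-- A graph is quasi-prime if every proper homogeneous set is a clique. -/
def QuasiPrime {V : Type*} (G : SimpleGraph V) : Prop :=
  ∀ S : Set V, IsHomog G S → 2 ≤ S.ncard → S ≠ Set.univ → G.IsClique S

/-- Given an induced gem `f 0, …, f 4` in `G` (with dominating vertex `f 4`), the set
`Vᵢ` of vertices whose neighborhood on `S \ {vᵢ}` equals `N_S(vᵢ)`, where
`S = {v₁,…,v₅}`. -/
def Vset {V : Type*} (G : SimpleGraph V) (f : Fin 5 ↪ V) (i : Fin 5) : Set V :=
  { x | ∀ j : Fin 5, j ≠ i → (G.Adj x (f j) ↔ gem.Adj i j) }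

/-- The set `X` of vertices complete to `{v₁, v₄}` and anticomplete to `{v₂, v₃}`. -/
def Xset {V : Type*} (G : SimpleGraph V) (f : Fin 5 ↪ V) : Set V :=
  { x | G.Adj x (f 0) ∧ G.Adj x (f 3) ∧ ¬ G.Adj x (f 1) ∧ ¬ G.Adj x (f 2) }

/-!
A vertex `x ∈ X` closes the path `v₁v₂v₃v₄` into an induced `C₅`, so a vertex adjacent to `x`
and to `v₁, …, v₄` would induce `F₂`; this makes `X` anticomplete to `V₅` and, since `v₅ ∈ V₅`,
nonadjacent to `v₅`. Knowing `x ≁ v₅`, a vertex of `V₁` (resp. `V₂`) violating the claim gives an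
induced bull (resp. a bull or `F₄`), whichever way it sees `v₁` (resp. `v₂`). The reflection
`vᵢ ↦ v₅₋ᵢ` of the gem fixes `X` and exchanges `V₁ ↔ V₄` and `V₂ ↔ V₃`, which settles the rest.
-/

instance : DecidableRel gem.Adj := fun _ _ => by
  rw [gem, SimpleGraph.fromRel_adj]; infer_instance

instance : DecidableRel bull.Adj := fun _ _ => by
  rw [bull, SimpleGraph.fromRel_adj]; infer_instance

instance : DecidableRel F2.Adj := fun _ _ => by
  rw [F2, SimpleGraph.fromRel_adj]; infer_instance

instance : DecidableRel F4.Adj := fun _ _ => by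
  rw [F4, SimpleGraph.fromRel_adj]; infer_instance

theorem InducedFree.false_of_adj_iff {α β : Type*} {F : SimpleGraph α} {G : SimpleGraph β}
    (hF : InducedFree F G) (hF_twin : ∀ a b, (∀ c, F.Adj a c ↔ F.Adj b c) → a = b)
    (g : α → β) (hg : ∀ a b, G.Adj (g a) (g b) ↔ F.Adj a b) : False := by
  refine hF ⟨⟨g, fun a b hab => hF_twin a b fun c => ?_⟩, hg⟩
  rw [← hg, ← hg, hab]

def gemFlip : gem ≃g gem where
  toEquiv := ⟨![3, 2, 1, 0, 4], ![3, 2, 1, 0, 4], by decide, by decide⟩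
  map_rel_iff' := by decide

section

variable {V : Type*} {G : SimpleGraph V} {f : Fin 5 ↪ V}

theorem mem_Vset_self (hgem : ∀ a b, G.Adj (f a) (f b) ↔ gem.Adj a b) (i : Fin 5) :
    f i ∈ Vset G f i :=
  fun j _ => hgem i j

theorem adj_iff_gem_comp_iso (hgem : ∀ a b, G.Adj (f a) (f b) ↔ gem.Adj a b) (σ : gem ≃g gem)
    (a b : Fin 5) :
    G.Adj ((σ.toEquiv.toEmbedding.trans f) a) ((σ.toEquiv.toEmbedding.trans f) b) ↔ gem.Adj a b :=
  (hgem _ _).trans σ.map_rel_iff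

theorem Vset_comp_iso (σ : gem ≃g gem) (i : Fin 5) :
    Vset G (σ.toEquiv.toEmbedding.trans f) i = Vset G f (σ i) := by
  ext y
  refine σ.toEquiv.forall_congr fun j => ?_
  simp [σ.map_rel_iff]

theorem Xset_comp_gemFlip : Xset G (gemFlip.toEquiv.toEmbedding.trans f) = Xset G f :=
  Set.ext fun _ =>
    ⟨fun ⟨h3, h0, h2, h1⟩ => ⟨h0, h3, h1, h2⟩, fun ⟨h0, h3, h1, h2⟩ => ⟨h3, h0, h2, h1⟩⟩

variable (hgem : ∀ a b, G.Adj (f a) (f b) ↔ gem.Adj a b)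
include hgem

theorem not_adj_of_mem_Xset_of_mem_Vset_four (h2 : InducedFree F2 G) {x y : V}
    (hx : x ∈ Xset G f) (hy : y ∈ Vset G f 4) : ¬G.Adj x y := by
  obtain ⟨hx0, hx3, hx1, hx2⟩ := hx
  intro hxy
  refine h2.false_of_adj_iff (by decide) ![f 0, f 1, f 2, f 3, x, y] fun a b => ?_
  fin_cases a <;> fin_cases b <;>
    simp +decide [G.adj_comm (f _) x, G.adj_comm (f _) y, G.adj_comm y x, hy _, *]

theorem not_adj_apex_of_mem_Xset (h2 : InducedFree F2 G) {x : V} (hx : x ∈ Xset G f) :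
    ¬G.Adj x (f 4) :=
  not_adj_of_mem_Xset_of_mem_Vset_four hgem h2 hx (mem_Vset_self hgem 4)

theorem adj_of_mem_Xset_of_mem_Vset_zero (hbull : InducedFree bull G) (h2 : InducedFree F2 G)
    {x y : V} (hx : x ∈ Xset G f) (hy : y ∈ Vset G f 0) : G.Adj x y := by
  have hx4 := not_adj_apex_of_mem_Xset hgem h2 hx
  obtain ⟨hx0, hx3, hx1, hx2⟩ := hx
  by_contra hxy
  by_cases hy0 : G.Adj y (f 0)
  · refine hbull.false_of_adj_iff (by decide) ![f 2, f 1, f 0, x, y] fun a b => ?_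
    fin_cases a <;> fin_cases b <;>
      simp +decide [G.adj_comm (f _) x, G.adj_comm (f _) y, G.adj_comm y x, hy _, *]
  · refine hbull.false_of_adj_iff (by decide) ![x, f 3, f 4, y, f 2] fun a b => ?_
    fin_cases a <;> fin_cases b <;>
      simp +decide [G.adj_comm (f _) x, G.adj_comm (f _) y, G.adj_comm y x, hy _, *]

theorem not_adj_of_mem_Xset_of_mem_Vset_one (hbull : InducedFree bull G) (h2 : InducedFree F2 G)
    (h4 : InducedFree F4 G) {x y : V} (hx : x ∈ Xset G f) (hy : y ∈ Vset G f 1) :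
    ¬G.Adj x y := by
  have hx4 := not_adj_apex_of_mem_Xset hgem h2 hx
  obtain ⟨hx0, hx3, hx1, hx2⟩ := hx
  intro hxy
  by_cases hy1 : G.Adj y (f 1)
  · refine h4.false_of_adj_iff (by decide) ![f 3, f 2, f 4, y, f 0, x] fun a b => ?_
    fin_cases a <;> fin_cases b <;>
      simp +decide [G.adj_comm (f _) x, G.adj_comm (f _) y, G.adj_comm y x, hy _, *]
  · refine hbull.false_of_adj_iff (by decide) ![f 1, f 0, x, f 3, y] fun a b => ?_
    fin_cases a <;> fin_cases b <;>
      simp +decide [G.adj_comm (f _) x, G.adj_comm (f _) y, G.adj_comm y x, hy _, *]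

theorem adj_of_mem_Xset_of_mem_Vset_three (hbull : InducedFree bull G) (h2 : InducedFree F2 G)
    {x y : V} (hx : x ∈ Xset G f) (hy : y ∈ Vset G f 3) : G.Adj x y := by
  rw [← Xset_comp_gemFlip] at hx
  rw [show (3 : Fin 5) = gemFlip 0 from rfl, ← Vset_comp_iso] at hy
  exact adj_of_mem_Xset_of_mem_Vset_zero (adj_iff_gem_comp_iso hgem gemFlip) hbull h2 hx hy

theorem not_adj_of_mem_Xset_of_mem_Vset_two (hbull : InducedFree bull G) (h2 : InducedFree F2 G)
    (h4 : InducedFree F4 G) {x y : V} (hx : x ∈ Xset G f) (hy : y ∈ Vset G f 2) :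
    ¬G.Adj x y := by
  rw [← Xset_comp_gemFlip] at hx
  rw [show (2 : Fin 5) = gemFlip 1 from rfl, ← Vset_comp_iso] at hy
  exact not_adj_of_mem_Xset_of_mem_Vset_one (adj_iff_gem_comp_iso hgem gemFlip) hbull h2 h4 hx hy

end

theorem gem_X_structure_general {V : Type*} (G : SimpleGraph V)
    (hbull : InducedFree bull G) (h2 : InducedFree F2 G) (h4 : InducedFree F4 G)
    (f : Fin 5 ↪ V) (hgem : ∀ a b : Fin 5, G.Adj (f a) (f b) ↔ gem.Adj a b) :
    (∀ x ∈ Xset G f, ∀ y ∈ Vset G f 4, ¬ G.Adj x y) ∧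
    ((Xset G f).Nonempty →
      ∀ x ∈ Xset G f,
        (∀ y, y ∈ Vset G f 0 ∪ Vset G f 3 → G.Adj x y) ∧
        (∀ y, y ∈ Vset G f 1 ∪ Vset G f 2 ∪ Vset G f 4 → ¬ G.Adj x y)) := by
  refine ⟨fun x hx y hy => not_adj_of_mem_Xset_of_mem_Vset_four hgem h2 hx hy,
    fun _ x hx => ⟨?_, ?_⟩⟩
  · rintro y (hy | hy)
    · exact adj_of_mem_Xset_of_mem_Vset_zero hgem hbull h2 hx hy
    · exact adj_of_mem_Xset_of_mem_Vset_three hgem hbull h2 hx hy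
  · rintro y ((hy | hy) | hy)
    · exact not_adj_of_mem_Xset_of_mem_Vset_one hgem hbull h2 h4 hx hy
    · exact not_adj_of_mem_Xset_of_mem_Vset_two hgem hbull h2 h4 hx hy
    · exact not_adj_of_mem_Xset_of_mem_Vset_four hgem h2 hx hy

/-- Items (a)–(b) of Theorem 4.1: for a quasi-prime `(P₆, bull)`-free graph with no
`K₅`, no double wheel and no `F₀,…,F₆`, containing an induced gem `v₁,…,v₅`, the set
`X` is anticomplete to `V₅`, and (`X` being nonempty) every vertex of `X` is complete
to `V₁ ∪ V₄` and anticomplete to `V₂ ∪ V₃ ∪ V₅`. -/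
theorem gem_X_structure {V : Type*} [Fintype V] (G : SimpleGraph V)
    (hP6 : InducedFree (SimpleGraph.pathGraph 6) G) (hbull : InducedFree bull G)
    (hqp : QuasiPrime G) (hK5 : G.CliqueFree 5) (hdw : InducedFree doubleWheel G)
    (h0 : InducedFree F0 G) (h1 : InducedFree F1 G) (h2 : InducedFree F2 G)
    (h3 : InducedFree F3 G) (h4 : InducedFree F4 G) (h5 : InducedFree F5 G)
    (h6 : InducedFree F6 G)
    (f : Fin 5 ↪ V) (hgem : ∀ a b : Fin 5, G.Adj (f a) (f b) ↔ gem.Adj a b) :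
    (∀ x ∈ Xset G f, ∀ y ∈ Vset G f 4, ¬ G.Adj x y) ∧
    ((Xset G f).Nonempty →
      ∀ x ∈ Xset G f,
        (∀ y, y ∈ Vset G f 0 ∪ Vset G f 3 → G.Adj x y) ∧
        (∀ y, y ∈ Vset G f 1 ∪ Vset G f 2 ∪ Vset G f 4 → ¬ G.Adj x y)) :=
  gem_X_structure_general G hbull h2 h4 f hgem
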